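/- arXiv:1611.09027 — 5 statements merged into one kernel-verified Lean document; each statement's English description precedes it below -/
import Mathlib

section
/- For every d ≥ 1 and every β > 0, the diamagnetic conductivity of the perfect conductor is strictly positive: ∫_{[−π,π]^d} cos(p₁)/(1 + e^{βE(p)}) d^d p > 0. In particular, the constant σ_d^{(β,0)} = 2(2π)^{−d} ∫_{[−π,π]^d} cos(p₁)/(1 + e^{βE(p)}) d^d p is nonzero. -/
/-!
By Fubini, integrate over `x = p₀` first. For fixed remaining momenta, with `S = ∑_{i ≠ 0} cos pᵢ`,
the integrand is `cos x * φ (cos x)` where `φ c = (1 + exp (β * (2 * (d - S - c))))⁻¹` is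
increasing in `c`.
The shift `x ↦ x + π` preserves the integral over a period and turns `cos x` into `-cos x`, so
twice the one-dimensional integral is `∫ cos x * (φ (cos x) - φ (-cos x))`, whose integrand is
nonnegative by monotonicity of `φ` and positive at `x = 0`.
-/

open MeasureTheory Real Set

theorem integral_cos_mul_comp_cos_pos {φ : ℝ → ℝ} (hφ : Continuous φ) (hmono : Monotone φ)
    (hlt : φ (-1) < φ 1) : 0 < ∫ x in -π..π, cos x * φ (cos x) := by
  set g : ℝ → ℝ := fun x => cos x * φ (cos x) with hg
  have hg_cont : Continuous g := by fun_prop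
  have hg_periodic : Function.Periodic g (2 * π) := fun x => by simp [hg]
  have hshift : ∫ x in -π..π, g (x + π) = ∫ x in -π..π, g x := by
    rw [intervalIntegral.integral_comp_add_right, show π + π = -π + π + 2 * π by ring,
      hg_periodic.intervalIntegral_add_eq (-π + π) (-π), show -π + 2 * π = π by ring]
  have hsymm : ∫ x in -π..π, cos x * (φ (cos x) - φ (-cos x)) = 2 * ∫ x in -π..π, g x := by
    rw [two_mul]
    nth_rewrite 2 [← hshift]
    rw [← intervalIntegral.integral_add (g := fun x => g (x + π)) (hg_cont.intervalIntegrable _ _)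
      ((hg_cont.comp (continuous_add_const π)).intervalIntegrable _ _)]
    congr 1 with x
    simp only [hg, cos_add_pi]
    ring
  have hpos : 0 < ∫ x in -π..π, cos x * (φ (cos x) - φ (-cos x)) := by
    refine intervalIntegral.integral_pos (by linarith [pi_pos]) (by fun_prop) (fun x _ => ?_)
      ⟨0, ⟨by linarith [pi_pos], by linarith [pi_pos]⟩, by simpa using hlt⟩
    rcases le_total 0 (cos x) with hc | hc
    · exact mul_nonneg hc (sub_nonneg.2 (hmono (by linarith)))
    · exact mul_nonneg_of_nonpos_of_nonpos hc (sub_nonpos.2 (hmono (by linarith)))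
  linarith

theorem integral_prod_pos_of_forall_integral_pos {α β : Type*} [MeasurableSpace α]
    [MeasurableSpace β] {μ : Measure α} {ν : Measure β} [SFinite μ] [SFinite ν] [NeZero ν]
    {f : α × β → ℝ} (hf : Integrable f (μ.prod ν)) (hpos : ∀ y, 0 < ∫ x, f (x, y) ∂μ) :
    0 < ∫ z, f z ∂μ.prod ν := by
  rw [integral_prod_symm f hf,
    integral_pos_iff_support_of_nonneg (fun y => (hpos y).le) hf.integral_prod_right,
    Function.support_eq_univ fun y => (hpos y).ne']
  exact NeZero.pos _

theorem setIntegral_Icc_cos_mul_comp_sum_cos_pos (n : ℕ) {ψ : ℝ → ℝ} (hψ : Continuous ψ)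
    (hmono : StrictMono ψ) :
    0 < ∫ p in Icc (fun _ : Fin (n + 1) => -π) (fun _ => π), cos (p 0) * ψ (∑ i, cos (p i)) := by
  set μ₀ : Measure ℝ := volume.restrict (Icc (-π) π)
  have hbox : volume.restrict (Icc (fun _ : Fin (n + 1) => -π) (fun _ => π)) =
      Measure.pi fun _ => μ₀ := by
    rw [volume_pi, ← Set.pi_univ_Icc, Measure.restrict_pi_pi]
  have hF : Continuous fun p : Fin (n + 1) → ℝ => cos (p 0) * ψ (∑ i, cos (p i)) := by fun_prop
  have hF_int : Integrable (fun p : Fin (n + 1) → ℝ => cos (p 0) * ψ (∑ i, cos (p i)))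
      (Measure.pi fun _ => μ₀) := by
    rw [← hbox]
    exact hF.continuousOn.integrableOn_compact isCompact_Icc
  have hsplit := (measurePreserving_piFinSuccAbove (fun _ : Fin (n + 1) => μ₀) 0).symm
  have : NeZero (Measure.pi fun _ : Fin n => μ₀) := by
    refine ⟨Measure.measure_univ_ne_zero.1 ?_⟩
    simp [μ₀, Measure.pi_univ, pi_pos]
  rw [hbox, ← hsplit.integral_comp']
  refine integral_prod_pos_of_forall_integral_pos ?_ fun y => ?_
  · exact (hsplit.integrable_comp_emb (MeasurableEquiv.measurableEmbedding _)).2 hF_int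
  · simp only [MeasurableEquiv.piFinSuccAbove_symm_apply, Fin.insertNthEquiv, Equiv.coe_fn_mk,
      Fin.sum_univ_succAbove _ (0 : Fin (n + 1)), Fin.insertNth_apply_same,
      Fin.insertNth_apply_succAbove]
    rw [integral_Icc_eq_integral_Ioc, ← intervalIntegral.integral_of_le (by linarith [pi_pos])]
    exact integral_cos_mul_comp_cos_pos (φ := fun c => ψ (c + ∑ i : Fin n, cos (y i))) (by fun_prop)
      (fun a b hab => hmono.monotone (by linarith)) (hmono (by linarith))

theorem strictMono_inv_one_add_exp {β : ℝ} (hβ : 0 < β) (C : ℝ) :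
    StrictMono fun s => (1 + exp (β * (2 * (C - s))))⁻¹ := fun a b hab => by
  refine inv_strictAnti₀ (by positivity) ?_
  gcongr

/-- Strict positivity of the diamagnetic conductivity of the perfect conductor:
`∫_{[−π,π]^d} cos(p₁)/(1+e^{βE(p)}) d^d p > 0` where `E(p) = 2[d − Σᵢ cos pᵢ]`,
and in particular `σ_d^{(β,0)} = 2(2π)^{−d} ∫ cos(p₁)/(1+e^{βE(p)}) ≠ 0`. -/
theorem diamagnetic_conductivity_positive (d : ℕ) (hd : 1 ≤ d) (β : ℝ) (hβ : 0 < β) :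
    (0 < ∫ p in Set.Icc (fun _ : Fin d => -Real.pi) (fun _ : Fin d => Real.pi),
        Real.cos (p ⟨0, hd⟩) /
          (1 + Real.exp (β * (2 * ((d : ℝ) - ∑ i : Fin d, Real.cos (p i)))))) ∧
    2 * ((2 * Real.pi) ^ d)⁻¹ *
        (∫ p in Set.Icc (fun _ : Fin d => -Real.pi) (fun _ : Fin d => Real.pi),
          Real.cos (p ⟨0, hd⟩) /
            (1 + Real.exp (β * (2 * ((d : ℝ) - ∑ i : Fin d, Real.cos (p i)))))) ≠ 0 := by
  have hpos : 0 < ∫ p in Set.Icc (fun _ : Fin d => -Real.pi) (fun _ : Fin d => Real.pi),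
      Real.cos (p ⟨0, hd⟩) /
        (1 + Real.exp (β * (2 * ((d : ℝ) - ∑ i : Fin d, Real.cos (p i))))) := by
    obtain ⟨n, rfl⟩ : ∃ n, d = n + 1 := ⟨d - 1, by omega⟩
    simpa only [div_eq_mul_inv, Fin.zero_eta] using setIntegral_Icc_cos_mul_comp_sum_cos_pos n
      (ψ := fun s => (1 + exp (β * (2 * ((n + 1 : ℕ) - s))))⁻¹)
      (Continuous.inv₀ (by fun_prop) fun s => by positivity)
      (strictMono_inv_one_add_exp hβ _)
  exact ⟨hpos, mul_ne_zero (by positivity) hpos.ne'⟩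
end

section
/- Let d ≥ 1, β > 0, λ ≥ 0, and let ω : ℤ^d → [−1,1]. Let V_ω be the multiplication operator by ω on ℓ²(ℤ^d) and let Δ_d be the discrete Laplacian. Then the Fermi symbols satisfy ‖(1 + e^{β(Δ_d + λV_ω)})^{−1} − (1 + e^{βΔ_d})^{−1}‖_op ≤ β λ e^{β(4d+λ)}. In particular, the Fermi symbol of the Anderson tight-binding model converges in operator norm to that of the free Laplacian, uniformly in the disorder realization ω, as λ → 0⁺. -/
/-!
For a self-adjoint element `a` of a C⋆-algebra, `1 ≤ 1 + exp a`, so the Fermi symbol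
`(1 + exp a)⁻¹` exists and has norm at most `1`. The resolvent identity
`(1 + exp a)⁻¹ - (1 + exp b)⁻¹ = (1 + exp a)⁻¹ (exp b - exp a) (1 + exp b)⁻¹` then reduces the
claim to the Lipschitz bound `‖exp a - exp b‖ ≤ ‖a - b‖ e^M` on the ball of radius `M`, which
follows termwise from `‖aⁿ⁺¹ - bⁿ⁺¹‖ ≤ (n + 1) Mⁿ ‖a - b‖`. On `ℓ²(ℤ^d)` the Laplacian is
`2d - ∑ᵢ (Sᵢ + Sᵢ⁻¹)` with unitary translations `Sᵢ`, hence self-adjoint of norm at most `4d`,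
while `λ V_ω` is self-adjoint of norm at most `λ`; take `M = β (4d + λ)`.
-/

open scoped ENNReal

section ExpLipschitz

variable {A : Type*} [NormedRing A]

theorem norm_pow_succ_sub_pow_succ_le {a b : A} {M : ℝ} (ha : ‖a‖ ≤ M) (hb : ‖b‖ ≤ M) (n : ℕ) :
    ‖a ^ (n + 1) - b ^ (n + 1)‖ ≤ (n + 1) * M ^ n * ‖a - b‖ := by
  induction n with
  | zero => simp
  | succ n ih =>
    have hM : 0 ≤ M := (norm_nonneg a).trans ha
    have hbn : ‖b ^ (n + 1)‖ ≤ M ^ (n + 1) :=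
      (norm_pow_le' b n.succ_pos).trans (pow_le_pow_left₀ (norm_nonneg b) hb _)
    calc ‖a ^ (n + 2) - b ^ (n + 2)‖
        = ‖a * (a ^ (n + 1) - b ^ (n + 1)) + (a - b) * b ^ (n + 1)‖ := by
          rw [pow_succ' a, pow_succ' b]; noncomm_ring
      _ ≤ ‖a‖ * ‖a ^ (n + 1) - b ^ (n + 1)‖ + ‖a - b‖ * ‖b ^ (n + 1)‖ :=
          norm_add_le_of_le (norm_mul_le _ _) (norm_mul_le _ _)
      _ ≤ M * ((n + 1) * M ^ n * ‖a - b‖) + ‖a - b‖ * M ^ (n + 1) := by gcongr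
      _ = (↑(n + 1) + 1) * M ^ (n + 1) * ‖a - b‖ := by push_cast; ring

open Nat in
theorem NormedSpace.norm_exp_sub_exp_le [NormedAlgebra ℝ A] [CompleteSpace A] {a b : A} {M : ℝ}
    (ha : ‖a‖ ≤ M) (hb : ‖b‖ ≤ M) : ‖exp a - exp b‖ ≤ ‖a - b‖ * Real.exp M := by
  have h_series : HasSum (fun n => (n !⁻¹ : ℝ) • (a ^ n - b ^ n)) (exp a - exp b) := by
    simpa only [smul_sub] using
      (exp_series_hasSum_exp' (𝕂 := ℝ) a).sub (exp_series_hasSum_exp' (𝕂 := ℝ) b)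
  have h_shifted := (hasSum_nat_add_iff' 1).2 h_series
  simp only [Finset.range_one, Finset.sum_singleton, pow_zero, sub_self, smul_zero,
    sub_zero] at h_shifted
  have h_bound : HasSum (fun n => ‖a - b‖ * (M ^ n / n !)) (‖a - b‖ * Real.exp M) := by
    rw [Real.exp_eq_exp_ℝ]
    exact (expSeries_div_hasSum_exp M).mul_left _
  refine h_shifted.norm_le_of_bounded h_bound fun n => ?_
  calc ‖((n + 1)! : ℝ)⁻¹ • (a ^ (n + 1) - b ^ (n + 1))‖
      ≤ ((n + 1)! : ℝ)⁻¹ * ((n + 1) * M ^ n * ‖a - b‖) := by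
        rw [norm_smul, Real.norm_of_nonneg (by positivity)]
        gcongr
        exact norm_pow_succ_sub_pow_succ_le ha hb n
    _ = ‖a - b‖ * (M ^ n / n !) := by
        rw [Nat.factorial_succ]; push_cast; field_simp

end ExpLipschitz

section FermiSymbol

variable {A : Type*} [CStarAlgebra A] [PartialOrder A] [StarOrderedRing A]

noncomputable def fermiSymbol (a : A) : A :=
  Ring.inverse (1 + NormedSpace.exp a)

theorem IsSelfAdjoint.one_le_one_add_exp {a : A} (ha : IsSelfAdjoint a) :
    1 ≤ 1 + NormedSpace.exp a :=
  le_add_of_nonneg_right ha.exp_nonneg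

theorem IsSelfAdjoint.isUnit_one_add_exp {a : A} (ha : IsSelfAdjoint a) :
    IsUnit (1 + NormedSpace.exp a) :=
  CStarAlgebra.isUnit_of_le 1 ha.one_le_one_add_exp

theorem IsSelfAdjoint.norm_fermiSymbol_le_one {a : A} (ha : IsSelfAdjoint a) :
    ‖fermiSymbol a‖ ≤ 1 := by
  have h_one_le := ha.one_le_one_add_exp
  rw [fermiSymbol]
  lift 1 + NormedSpace.exp a to Aˣ using ha.isUnit_one_add_exp with u
  rw [Ring.inverse_unit, CStarAlgebra.norm_le_one_iff_of_nonneg _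
    (CFC.inv_nonneg_of_nonneg u (zero_le_one.trans h_one_le))]
  exact CStarAlgebra.inv_le_one h_one_le

theorem norm_fermiSymbol_sub_fermiSymbol_le {a b : A} (ha : IsSelfAdjoint a)
    (hb : IsSelfAdjoint b) {M : ℝ} (ha_le : ‖a‖ ≤ M) (hb_le : ‖b‖ ≤ M) :
    ‖fermiSymbol a - fermiSymbol b‖ ≤ ‖a - b‖ * Real.exp M := by
  rw [fermiSymbol, fermiSymbol,
    Ring.inverse_sub_inverse (iff_of_true ha.isUnit_one_add_exp hb.isUnit_one_add_exp),
    add_sub_add_left_eq_sub]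
  calc _ ≤ ‖fermiSymbol a‖ * ‖NormedSpace.exp b - NormedSpace.exp a‖ * ‖fermiSymbol b‖ :=
        norm_mul₃_le
    _ ≤ 1 * (‖b - a‖ * Real.exp M) * 1 := by
        gcongr
        exacts [ha.norm_fermiSymbol_le_one, NormedSpace.norm_exp_sub_exp_le hb_le ha_le,
          hb.norm_fermiSymbol_le_one]
    _ = ‖a - b‖ * Real.exp M := by rw [one_mul, mul_one, norm_sub_rev]

end FermiSymbol

-- `StarModule ℝ` is not found for operators on `ℓ²`, so real scalars are routed through `ℂ`.
theorem IsSelfAdjoint.real_smul {A : Type*} [AddCommGroup A] [StarAddMonoid A] [Module ℂ A]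
    [Module ℝ A] [IsScalarTower ℝ ℂ A] [StarModule ℂ A] {x : A} (hx : IsSelfAdjoint x) (r : ℝ) :
    IsSelfAdjoint (r • x) := by
  rw [RCLike.real_smul_eq_coe_smul (K := ℂ)]
  exact IsSelfAdjoint.smul (Complex.conj_ofReal r) hx

namespace lp

variable {𝕜 ι : Type*} [RCLike 𝕜]

theorem memℓp_comp_equiv (σ : ι ≃ ι) (ψ : lp (fun _ : ι => 𝕜) 2) :
    Memℓp (fun x => ψ (σ x)) 2 :=
  memℓp_gen <| (σ.summable_iff (f := fun x => ‖ψ x‖ ^ (2 : ℝ≥0∞).toReal)).2 <|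
    (lp.memℓp ψ).summable (by norm_num)

variable (𝕜) in
noncomputable def compEquiv (σ : ι ≃ ι) :
    lp (fun _ : ι => 𝕜) 2 ≃ₗᵢ[𝕜] lp (fun _ : ι => 𝕜) 2 where
  toFun ψ := ⟨fun x => ψ (σ x), memℓp_comp_equiv σ ψ⟩
  invFun ψ := ⟨fun x => ψ (σ.symm x), memℓp_comp_equiv σ.symm ψ⟩
  map_add' _ _ := rfl
  map_smul' _ _ := rfl
  left_inv ψ := lp.ext <| funext fun x => by simp
  right_inv ψ := lp.ext <| funext fun x => by simp
  norm_map' ψ := by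
    have hp : 0 < (2 : ℝ≥0∞).toReal := by norm_num
    simp only [LinearEquiv.coe_mk, lp.norm_eq_tsum_rpow hp]
    exact congrArg (· ^ _) (σ.tsum_eq (fun x => ‖ψ x‖ ^ (2 : ℝ≥0∞).toReal))

variable (𝕜) in
noncomputable def hopping (σ : ι ≃ ι) : lp (fun _ : ι => 𝕜) 2 →L[𝕜] lp (fun _ : ι => 𝕜) 2 :=
  (compEquiv 𝕜 σ : lp (fun _ : ι => 𝕜) 2 →L[𝕜] lp (fun _ : ι => 𝕜) 2) + (compEquiv 𝕜 σ).symm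

theorem hopping_apply (σ : ι ≃ ι) (ψ : lp (fun _ : ι => 𝕜) 2) (x : ι) :
    hopping 𝕜 σ ψ x = ψ (σ x) + ψ (σ.symm x) :=
  rfl

theorem isSelfAdjoint_hopping (σ : ι ≃ ι) : IsSelfAdjoint (hopping 𝕜 σ) := by
  rw [hopping, IsSelfAdjoint, star_add, LinearIsometryEquiv.star_eq_symm,
    LinearIsometryEquiv.star_eq_symm, LinearIsometryEquiv.symm_symm, add_comm]

theorem norm_hopping_le (σ : ι ≃ ι) : ‖hopping 𝕜 σ‖ ≤ 2 :=
  ContinuousLinearMap.opNorm_le_bound _ zero_le_two fun ψ =>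
    (norm_add_le _ _).trans_eq <| by simp [two_mul]

theorem norm_le_of_apply_eq_mul {V : lp (fun _ : ι => 𝕜) 2 →L[𝕜] lp (fun _ : ι => 𝕜) 2}
    {ω : ι → ℝ} {C : ℝ} (hC : 0 ≤ C) (hω : ∀ x, |ω x| ≤ C) (hV : ∀ ψ x, V ψ x = ω x * ψ x) :
    ‖V‖ ≤ C := by
  refine V.opNorm_le_bound hC fun ψ => ?_
  calc ‖V ψ‖ ≤ ‖C • ψ‖ := lp.norm_mono two_ne_zero fun x => by
        rw [hV, lp.coeFn_smul, Pi.smul_apply, norm_mul, norm_smul, RCLike.norm_ofReal]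
        exact mul_le_mul_of_nonneg_right ((hω x).trans (le_abs_self C)) (norm_nonneg _)
    _ ≤ C * ‖ψ‖ := by rw [norm_smul, Real.norm_of_nonneg hC]

theorem isSelfAdjoint_of_apply_eq_mul {V : lp (fun _ : ι => 𝕜) 2 →L[𝕜] lp (fun _ : ι => 𝕜) 2}
    {ω : ι → ℝ} (hV : ∀ ψ x, V ψ x = ω x * ψ x) : IsSelfAdjoint V := by
  rw [ContinuousLinearMap.isSelfAdjoint_iff_isSymmetric]
  intro ψ φ
  simp only [ContinuousLinearMap.coe_coe, lp.inner_eq_tsum, RCLike.inner_apply, hV, map_mul,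
    RCLike.conj_ofReal]
  exact tsum_congr fun x => by ring

end lp

section LatticeLaplacian

variable (𝕜 : Type*) [RCLike 𝕜] (d : ℕ)

noncomputable def latticeLaplacian :
    lp (fun _ : Fin d → ℤ => 𝕜) 2 →L[𝕜] lp (fun _ : Fin d → ℤ => 𝕜) 2 :=
  ((2 * d : ℕ) : 𝕜) • 1 - ∑ i, lp.hopping 𝕜 (Equiv.addRight (Pi.single i (1 : ℤ)))

theorem isSelfAdjoint_latticeLaplacian : IsSelfAdjoint (latticeLaplacian 𝕜 d) :=
  ((IsSelfAdjoint.natCast _).smul (.one _)).sub <|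
    isSelfAdjoint_sum _ fun _ _ => lp.isSelfAdjoint_hopping _

theorem norm_latticeLaplacian_le : ‖latticeLaplacian 𝕜 d‖ ≤ 4 * d := by
  have h_diag : ‖(((2 * d : ℕ) : 𝕜) • 1 :
      lp (fun _ : Fin d → ℤ => 𝕜) 2 →L[𝕜] lp (fun _ : Fin d → ℤ => 𝕜) 2)‖ ≤ 2 * d :=
    ContinuousLinearMap.opNorm_le_bound _ (by positivity) fun ψ => by simp [norm_smul]
  have h_hop : ‖∑ i : Fin d, lp.hopping 𝕜 (Equiv.addRight (Pi.single i (1 : ℤ)))‖ ≤ 2 * d := by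
    refine (norm_sum_le_of_le _ fun i _ => lp.norm_hopping_le _).trans ?_
    simp [mul_comm]
  exact (norm_sub_le _ _).trans (by linarith)

variable {𝕜 d}

theorem latticeLaplacian_apply (ψ : lp (fun _ : Fin d → ℤ => 𝕜) 2) (x : Fin d → ℤ) :
    latticeLaplacian 𝕜 d ψ x
      = 2 * d * ψ x - ∑ i, (ψ (x + Pi.single i 1) + ψ (x - Pi.single i 1)) := by
  simp only [latticeLaplacian, sub_apply, sum_apply, smul_apply, one_apply_eq_self,
    lp.coeFn_smul, lp.coeFn_sub, lp.coeFn_sum, Pi.smul_apply, Pi.sub_apply, Finset.sum_apply,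
    lp.hopping_apply, Equiv.coe_addRight, Equiv.addRight_symm, smul_eq_mul]
  push_cast
  simp only [sub_eq_add_neg]

end LatticeLaplacian

theorem anderson_fermi_symbol_small_disorder_general (d : ℕ) (β lam : ℝ)
    (hβ : 0 < β) (hlam : 0 ≤ lam) (ω : (Fin d → ℤ) → ℝ)
    (hω : ∀ x : Fin d → ℤ, ω x ∈ Set.Icc (-1 : ℝ) 1)
    (L V : lp (fun _ : Fin d → ℤ => ℂ) 2 →L[ℂ] lp (fun _ : Fin d → ℤ => ℂ) 2)
    (hL : ∀ (ψ : lp (fun _ : Fin d → ℤ => ℂ) 2) (x : Fin d → ℤ),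
      (L ψ) x = 2 * (d : ℂ) * ψ x
        - ∑ i : Fin d, (ψ (x + Pi.single i 1) + ψ (x - Pi.single i 1)))
    (hV : ∀ (ψ : lp (fun _ : Fin d → ℤ => ℂ) 2) (x : Fin d → ℤ),
      (V ψ) x = (ω x : ℂ) * ψ x) :
    ‖Ring.inverse (1 + NormedSpace.exp (β • (L + lam • V)))
        - Ring.inverse (1 + NormedSpace.exp (β • L))‖
      ≤ β * lam * Real.exp (β * (4 * d + lam)) := by
  obtain rfl : L = latticeLaplacian ℂ d :=
    ContinuousLinearMap.ext fun ψ => lp.ext <| funext fun x => by rw [hL, latticeLaplacian_apply]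
  have hL_sa := isSelfAdjoint_latticeLaplacian ℂ d
  have hV_sa : IsSelfAdjoint V := lp.isSelfAdjoint_of_apply_eq_mul hV
  have hV_norm : ‖lam • V‖ ≤ lam :=
    (norm_smul_le lam V).trans <| by
      rw [Real.norm_of_nonneg hlam]
      exact mul_le_of_le_one_right hlam
        (lp.norm_le_of_apply_eq_mul zero_le_one (fun x => abs_le.2 (hω x)) hV)
  have hH_norm : ‖latticeLaplacian ℂ d + lam • V‖ ≤ 4 * d + lam :=
    (norm_add_le _ _).trans (add_le_add (norm_latticeLaplacian_le ℂ d) hV_norm)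
  refine (norm_fermiSymbol_sub_fermiSymbol_le (M := β * (4 * d + lam))
    ((hL_sa.add (hV_sa.real_smul lam)).real_smul β) (hL_sa.real_smul β) ?_ ?_).trans ?_
  · rw [norm_smul, Real.norm_of_nonneg hβ.le]
    gcongr
  · rw [norm_smul, Real.norm_of_nonneg hβ.le]
    gcongr
    linarith [norm_latticeLaplacian_le ℂ d]
  · rw [← smul_sub, add_sub_cancel_left, norm_smul, Real.norm_of_nonneg hβ.le]
    gcongr

/-- The Fermi symbol of the Anderson tight-binding model is close in operator norm
to that of the free Laplacian, uniformly in the disorder realization `ω`: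
`‖(1+e^{β(Δ_d+λV_ω)})⁻¹ − (1+e^{βΔ_d})⁻¹‖ ≤ βλ e^{β(4d+λ)}`. -/
theorem anderson_fermi_symbol_small_disorder (d : ℕ) (hd : 1 ≤ d) (β lam : ℝ)
    (hβ : 0 < β) (hlam : 0 ≤ lam) (ω : (Fin d → ℤ) → ℝ)
    (hω : ∀ x : Fin d → ℤ, ω x ∈ Set.Icc (-1 : ℝ) 1)
    (L V : lp (fun _ : Fin d → ℤ => ℂ) 2 →L[ℂ] lp (fun _ : Fin d → ℤ => ℂ) 2)
    (hL : ∀ (ψ : lp (fun _ : Fin d → ℤ => ℂ) 2) (x : Fin d → ℤ),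
      (L ψ) x = 2 * (d : ℂ) * ψ x
        - ∑ i : Fin d, (ψ (x + Pi.single i 1) + ψ (x - Pi.single i 1)))
    (hV : ∀ (ψ : lp (fun _ : Fin d → ℤ => ℂ) 2) (x : Fin d → ℤ),
      (V ψ) x = (ω x : ℂ) * ψ x) :
    ‖Ring.inverse (1 + NormedSpace.exp (β • (L + lam • V)))
        - Ring.inverse (1 + NormedSpace.exp (β • L))‖
      ≤ β * lam * Real.exp (β * (4 * d + lam)) :=
  anderson_fermi_symbol_small_disorder_general d β lam hβ hlam ω hω L V hL hV
end

section
/- Let H₀ and W be bounded self-adjoint operators on a complex Hilbert space, let t ≥ 0 and N ≥ 1. Define the N-th Dyson approximant S_N(t) := e^{−itH₀} + Σ_{n=1}^{N−1} (−i)^n ∫_0^t dt₁ ∫_0^{t₁} dt₂ ⋯ ∫_0^{t_{n−1}} dt_n e^{−i(t−t₁)H₀} W e^{−i(t₁−t₂)H₀} W ⋯ W e^{−it_n H₀}. Then ‖e^{−it(H₀+W)} − S_N(t)‖_op ≤ (t‖W‖_op)^N / N!. In particular, S_N(t) converges in operator norm to e^{−it(H₀+W)} as N → ∞, uniformly for t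 in compact sets and uniformly in H₀ ranging over self-adjoint operators. -/
/-! Write `U(t) = e^{-it(H₀+W)}` and `R_N = U - S_N`. Duhamel's formula
`U(t) - e^{-itH₀} = -i ∫₀ᵗ e^{-i(t-s)H₀} W U(s) ds`, combined with the recursion defining the
Dyson terms, gives `R_{N+1}(t) = -i ∫₀ᵗ e^{-i(t-s)H₀} W R_N(s) ds`. As `e^{-irH₀}` is unitary,
`‖R_{N+1}(t)‖ ≤ ‖W‖ ∫₀ᵗ ‖R_N(s)‖ ds`, and `‖R₀(t)‖ = ‖U(t)‖ ≤ 1`; iterating this Volterra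
inequality yields `(t‖W‖)^N / N!`. -/

open MeasureTheory intervalIntegral

section BanachAlgebra

variable {𝔸 : Type*} [NormedRing 𝔸] [NormedAlgebra ℂ 𝔸]

noncomputable def propagator (A : 𝔸) (r : ℝ) : 𝔸 :=
  NormedSpace.exp ((-Complex.I * (r : ℂ)) • A)

noncomputable def duhamelIntegral (A B : 𝔸) (f : ℝ → 𝔸) (t : ℝ) : 𝔸 :=
  ∫ s in (0 : ℝ)..t, (-Complex.I) • (propagator A (t - s) * (B * f s))

variable [CompleteSpace 𝔸]

theorem hasDerivAt_neg_I_mul_ofReal (s : ℝ) :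
    HasDerivAt (fun r : ℝ => -Complex.I * (r : ℂ)) (-Complex.I) s := by
  simpa using (hasDerivAt_id s).ofReal_comp.const_mul (-Complex.I)

theorem hasDerivAt_propagator (A : 𝔸) (s : ℝ) :
    HasDerivAt (propagator A) ((-Complex.I) • (A * propagator A s)) s :=
  (hasDerivAt_exp_smul_const' (𝕂 := ℂ) A _).scomp s (hasDerivAt_neg_I_mul_ofReal s)

theorem hasDerivAt_propagator' (A : 𝔸) (s : ℝ) :
    HasDerivAt (propagator A) ((-Complex.I) • (propagator A s * A)) s :=
  (hasDerivAt_exp_smul_const (𝕂 := ℂ) A _).scomp s (hasDerivAt_neg_I_mul_ofReal s)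

theorem continuous_propagator (A : 𝔸) : Continuous (propagator A) :=
  continuous_iff_continuousAt.2 fun s => (hasDerivAt_propagator A s).continuousAt

theorem continuous_duhamelIntegrand (A B : 𝔸) {f : ℝ → 𝔸} (hf : Continuous f) :
    Continuous fun p : ℝ × ℝ => (-Complex.I) • (propagator A (p.1 - p.2) * (B * f p.2)) := by
  have := continuous_propagator A
  fun_prop

theorem continuous_duhamelIntegral (A B : 𝔸) {f : ℝ → 𝔸} (hf : Continuous f) :
    Continuous (duhamelIntegral A B f) :=
  continuous_parametric_intervalIntegral_of_continuous
    (continuous_duhamelIntegrand A B hf) continuous_id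

theorem intervalIntegrable_duhamelIntegrand (A B : 𝔸) {f : ℝ → 𝔸} (hf : Continuous f) (t : ℝ) :
    IntervalIntegrable (fun s => (-Complex.I) • (propagator A (t - s) * (B * f s))) volume 0 t :=
  ((continuous_duhamelIntegrand A B hf).comp (Continuous.prodMk_right t)).intervalIntegrable _ _

theorem duhamelIntegral_sub (A B : 𝔸) {f g : ℝ → 𝔸} (hf : Continuous f) (hg : Continuous g)
    (t : ℝ) :
    duhamelIntegral A B (fun s => f s - g s) t
      = duhamelIntegral A B f t - duhamelIntegral A B g t := by
  simp only [duhamelIntegral, mul_sub, smul_sub]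
  exact integral_sub (intervalIntegrable_duhamelIntegrand A B hf t)
    (intervalIntegrable_duhamelIntegrand A B hg t)

-- Duhamel's formula: the integrand is the derivative of `s ↦ e^{-i(t-s)A} e^{-is(A+B)}`.
theorem propagator_add_sub_propagator (A B : 𝔸) (t : ℝ) :
    propagator (A + B) t - propagator A t = duhamelIntegral A B (propagator (A + B)) t := by
  have hderiv : ∀ s : ℝ, HasDerivAt (fun s => propagator A (t - s) * propagator (A + B) s)
      ((-Complex.I) • (propagator A (t - s) * (B * propagator (A + B) s))) s := by
    intro s
    have h₁ := (hasDerivAt_propagator' A (t - s)).scomp s ((hasDerivAt_id s).const_sub t)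
    refine (h₁.mul (hasDerivAt_propagator (A + B) s)).congr_deriv ?_
    simp only [Function.comp_apply, neg_one_smul, neg_mul, smul_mul_assoc, mul_smul_comm,
      add_mul, mul_add, smul_add, mul_assoc]
    abel
  have := integral_eq_sub_of_hasDerivAt (fun s _ => hderiv s)
    (intervalIntegrable_duhamelIntegrand A B (continuous_propagator (A + B)) t)
  simpa [propagator, duhamelIntegral] using this.symm

end BanachAlgebra

theorem CStarRing.norm_le_one_of_mem_unitary {E : Type*} [NormedRing E] [StarRing E]
    [CStarRing E] {u : E} (hu : u ∈ unitary E) : ‖u‖ ≤ 1 := by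
  rcases subsingleton_or_nontrivial E with hE | hE
  · simp [Subsingleton.elim u 0]
  · exact (CStarRing.norm_of_mem_unitary hu).le

section CStarAlgebra

variable {𝔸 : Type*} [NormedRing 𝔸] [StarRing 𝔸] [CStarRing 𝔸] [NormedAlgebra ℂ 𝔸]
  [StarModule ℂ 𝔸] [CompleteSpace 𝔸]

theorem propagator_mem_unitary {A : 𝔸} (hA : IsSelfAdjoint A) (r : ℝ) :
    propagator A r ∈ unitary 𝔸 := by
  let +nondep : NormedAlgebra ℚ 𝔸 := .restrictScalars ℚ ℂ 𝔸
  refine NormedSpace.exp_mem_unitary_of_mem_skewAdjoint (hA.smul_mem_skewAdjoint ?_)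
  simp [skewAdjoint.mem_iff]

theorem norm_duhamelIntegral_le {A : 𝔸} (hA : IsSelfAdjoint A) (B : 𝔸) {f : ℝ → 𝔸}
    (hf : Continuous f) {t : ℝ} (ht : 0 ≤ t) :
    ‖duhamelIntegral A B f t‖ ≤ ‖B‖ * ∫ s in (0 : ℝ)..t, ‖f s‖ := by
  rw [← intervalIntegral.integral_const_mul]
  refine norm_integral_le_of_norm_le ht (Filter.Eventually.of_forall fun s _ => ?_)
    ((continuous_const.mul hf.norm).intervalIntegrable _ _)
  rw [norm_smul, norm_neg, Complex.norm_I, one_mul,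
    CStarRing.norm_mem_unitary_mul _ (propagator_mem_unitary hA _)]
  exact norm_mul_le _ _

end CStarAlgebra

theorem mul_integral_pow_div_factorial (c t : ℝ) (n : ℕ) :
    c * ∫ s in (0 : ℝ)..t, (c * s) ^ n / n.factorial = (c * t) ^ (n + 1) / (n + 1).factorial := by
  simp only [mul_pow, intervalIntegral.integral_div, intervalIntegral.integral_const_mul,
    integral_pow, Nat.factorial_succ]
  push_cast
  field_simp
  ring

theorem le_pow_div_factorial_of_le_integral {g : ℕ → ℝ → ℝ} {c : ℝ} (hc : 0 ≤ c)
    (hg : ∀ n t, IntervalIntegrable (g n) volume 0 t) (h₀ : ∀ t, 0 ≤ t → g 0 t ≤ 1)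
    (hsucc : ∀ n t, 0 ≤ t → g (n + 1) t ≤ c * ∫ s in (0 : ℝ)..t, g n s) (n : ℕ) {t : ℝ}
    (ht : 0 ≤ t) : g n t ≤ (c * t) ^ n / n.factorial := by
  induction n generalizing t with
  | zero => simpa using h₀ t ht
  | succ n ih =>
    calc g (n + 1) t ≤ c * ∫ s in (0 : ℝ)..t, g n s := hsucc n t ht
      _ ≤ c * ∫ s in (0 : ℝ)..t, (c * s) ^ n / n.factorial := by
        gcongr
        exact integral_mono_on ht (hg n t) (Continuous.intervalIntegrable (by fun_prop) _ _)
          fun s hs => ih hs.1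
      _ = (c * t) ^ (n + 1) / (n + 1).factorial := mul_integral_pow_div_factorial c t n

section DysonSeries

variable {𝔸 : Type*} [NormedRing 𝔸] [NormedAlgebra ℂ 𝔸] [CompleteSpace 𝔸] {A B : 𝔸}
  {T : ℕ → ℝ → 𝔸}

theorem continuous_dysonTerm (hT₀ : ∀ t, T 0 t = propagator A t)
    (hT : ∀ n t, T (n + 1) t = duhamelIntegral A B (T n) t) (n : ℕ) : Continuous (T n) := by
  induction n with
  | zero => simpa only [← funext hT₀] using continuous_propagator A
  | succ n ih => simpa only [← funext (hT n)] using continuous_duhamelIntegral A B ih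

theorem propagator_sub_sum_dysonTerm (hT₀ : ∀ t, T 0 t = propagator A t)
    (hT : ∀ n t, T (n + 1) t = duhamelIntegral A B (T n) t) (N : ℕ) (t : ℝ) :
    propagator (A + B) t - ∑ n ∈ Finset.range (N + 1), T n t
      = duhamelIntegral A B (fun s => propagator (A + B) s - ∑ n ∈ Finset.range N, T n s) t := by
  induction N generalizing t with
  | zero => simpa [hT₀] using propagator_add_sub_propagator A B t
  | succ N ih =>
    have hsum : Continuous fun s => ∑ n ∈ Finset.range N, T n s :=
      continuous_finsetSum _ fun n _ => continuous_dysonTerm hT₀ hT n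
    rw [Finset.sum_range_succ, ← sub_sub, ih, hT,
      ← duhamelIntegral_sub A B (f := fun s => propagator (A + B) s - ∑ n ∈ Finset.range N, T n s)
        ((continuous_propagator _).sub hsum) (continuous_dysonTerm hT₀ hT N)]
    simp only [Finset.sum_range_succ, sub_sub]

end DysonSeries

theorem dyson_series_bound_general {H : Type*} [NormedAddCommGroup H] [InnerProductSpace ℂ H]
    [CompleteSpace H] (H₀ W : H →L[ℂ] H) (hH₀ : IsSelfAdjoint H₀) (hW : IsSelfAdjoint W)
    (T : ℕ → ℝ → (H →L[ℂ] H))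
    (hT0 : ∀ t : ℝ, T 0 t = NormedSpace.exp ((-Complex.I * (t : ℂ)) • H₀))
    (hTrec : ∀ (n : ℕ) (t : ℝ),
      T (n + 1) t = ∫ s in (0 : ℝ)..t,
        (-Complex.I) • (NormedSpace.exp ((-Complex.I * ((t - s : ℝ) : ℂ)) • H₀) * (W * T n s)))
    (t : ℝ) (ht : 0 ≤ t) (N : ℕ) :
    ‖NormedSpace.exp ((-Complex.I * (t : ℂ)) • (H₀ + W)) - ∑ n ∈ Finset.range N, T n t‖
      ≤ (t * ‖W‖) ^ N / N.factorial := by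
  have hT : ∀ n t, T (n + 1) t = duhamelIntegral H₀ W (T n) t := hTrec
  have hR : ∀ N, Continuous fun t => propagator (H₀ + W) t - ∑ n ∈ Finset.range N, T n t :=
    fun N => (continuous_propagator _).sub
      (continuous_finsetSum _ fun n _ => continuous_dysonTerm hT0 hT n)
  have hbound := le_pow_div_factorial_of_le_integral (norm_nonneg W)
    (fun N t => (hR N).norm.intervalIntegrable 0 t)
    (fun t _ => by
      simpa using CStarRing.norm_le_one_of_mem_unitary (propagator_mem_unitary (hH₀.add hW) t))
    (fun N t ht => by
      simpa only [propagator_sub_sum_dysonTerm hT0 hT] using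
        norm_duhamelIntegral_le hH₀ W (hR N) ht)
    N ht
  rwa [mul_comm t]

/-- Convergence of the Dyson series: if `T n t` denotes the `n`-th term of the Dyson
expansion (defined through its standard recursion, so that
`T n t = (−i)^n ∫_0^t dt₁ ⋯ ∫_0^{t_{n−1}} dt_n  e^{−i(t−t₁)H₀} W ⋯ W e^{−i t_n H₀}`),
then the `N`-th Dyson approximant `S_N(t) = Σ_{n<N} T n t` satisfies
`‖e^{−it(H₀+W)} − S_N(t)‖ ≤ (t‖W‖)^N / N!`. -/
theorem dyson_series_bound {H : Type*} [NormedAddCommGroup H] [InnerProductSpace ℂ H]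
    [CompleteSpace H] (H₀ W : H →L[ℂ] H) (hH₀ : IsSelfAdjoint H₀) (hW : IsSelfAdjoint W)
    (T : ℕ → ℝ → (H →L[ℂ] H))
    (hT0 : ∀ t : ℝ, T 0 t = NormedSpace.exp ((-Complex.I * (t : ℂ)) • H₀))
    (hTrec : ∀ (n : ℕ) (t : ℝ),
      T (n + 1) t = ∫ s in (0 : ℝ)..t,
        (-Complex.I) • (NormedSpace.exp ((-Complex.I * ((t - s : ℝ) : ℂ)) • H₀) * (W * T n s)))
    (t : ℝ) (ht : 0 ≤ t) (N : ℕ) (hN : 1 ≤ N) :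
    ‖NormedSpace.exp ((-Complex.I * (t : ℂ)) • (H₀ + W)) - ∑ n ∈ Finset.range N, T n t‖
      ≤ (t * ‖W‖) ^ N / N.factorial :=
  dyson_series_bound_general H₀ W hH₀ hW T hT0 hTrec t ht N
end

section
/- Let μ be a finite positive Borel measure on ℝ with μ(ℝ ∖ {0}) > 0. Then the set Z := {φ ∈ 𝒮(ℝ;ℝ) : ∫_{ℝ∖{0}} |φ̂(ν)|² dμ(ν) = 0} is meager in the Fréchet space 𝒮(ℝ;ℝ) of real-valued Schwartz functions equipped with its usual locally convex topology, where φ̂(ν) = ∫_ℝ e^{−iνs} φ(s) ds. (Non-vanishing of the AC-conductivity measure implies strictly positive heat production for all electric field pulses outside a meager set.) -/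
/-!
The condition `∫_{ℝ∖{0}} |φ̂|² dμ = 0` says that `φ̂` vanishes `μ`-a.e. on `ℝ∖{0}`, i.e. that `φ`
lies in the kernel of the continuous linear map `𝒮(ℝ;ℝ) → L²(μ|_{ℝ∖{0}})`, `φ ↦ φ̂`, which
factors through the Fourier transform of `𝒮(ℝ;ℂ)` and the embedding of bounded continuous
functions into `L²` of a finite measure. This kernel is a closed subspace, and it is proper:
the Fourier transform of the Gaussian `e^{-s²/2}` vanishes nowhere, while `μ(ℝ∖{0}) > 0`.
A proper closed subspace of a topological vector space has empty interior, so it is nowhere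
dense, hence meager.
-/

open MeasureTheory SchwartzMap Real BoundedContinuousFunction Polynomial
open scoped FourierTransform

noncomputable section

theorem ContinuousLinearMap.isNowhereDense_ker {𝕜 E F : Type*} [NontriviallyNormedField 𝕜]
    [AddCommGroup E] [TopologicalSpace E] [ContinuousAdd E] [Module 𝕜 E] [ContinuousSMul 𝕜 E]
    [AddCommMonoid F] [TopologicalSpace F] [T1Space F] [Module 𝕜 F] {T : E →L[𝕜] F}
    (hT : T ≠ 0) : IsNowhereDense ((T : E →ₗ[𝕜] F).ker : Set E) := by
  rw [T.isClosed_ker.isNowhereDense_iff, ← Set.not_nonempty_iff_eq_empty]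
  intro h
  exact hT (ContinuousLinearMap.coe_injective
    (LinearMap.ker_eq_top.1 ((T : E →ₗ[𝕜] F).ker.eq_top_of_nonempty_interior' h)))

namespace BoundedContinuousFunction

variable {α E : Type*} [MeasurableSpace α] [TopologicalSpace α] [NormedAddCommGroup E]
  {μ : Measure α} [IsFiniteMeasure μ]

theorem toLp_eq_zero_iff [BorelSpace α] [SecondCountableTopologyEither α E] {p : ENNReal}
    [Fact (1 ≤ p)] (𝕜 : Type*) [NormedRing 𝕜] [Module 𝕜 E] [IsBoundedSMul 𝕜 E] (f : α →ᵇ E) :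
    toLp p μ 𝕜 f = 0 ↔ f =ᵐ[μ] 0 := by
  rw [Lp.eq_zero_iff_ae_eq_zero]
  exact ⟨(coeFn_toLp p μ 𝕜 f).symm.trans, (coeFn_toLp p μ 𝕜 f).trans⟩

theorem ae_eq_zero_of_integral_norm_sq_eq_zero [OpensMeasurableSpace α] (f : α →ᵇ E)
    (h : ∫ x, ‖f x‖ ^ 2 ∂μ = 0) : f =ᵐ[μ] 0 := by
  have hint : Integrable (fun x => ‖f x‖ ^ 2) μ :=
    .of_bound (f.continuous.norm.pow 2).aestronglyMeasurable (‖f‖ ^ 2) (.of_forall fun x => by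
      rw [norm_pow, norm_norm]
      exact pow_le_pow_left₀ (norm_nonneg _) (f.norm_coe_le_norm x) 2)
  filter_upwards [(integral_eq_zero_iff_of_nonneg (fun _ => by positivity) hint).1 h] with x hx
  simpa using hx

end BoundedContinuousFunction

theorem abs_pow_mul_exp_neg_sq_half_le (j : ℕ) (x : ℝ) :
    |x| ^ j * rexp (-(x ^ 2 / 2)) ≤ j.factorial * rexp (1 / 2) := by
  have hpow : |x| ^ j ≤ j.factorial * rexp |x| := by
    have := pow_div_factorial_le_exp |x| (abs_nonneg x) j
    rwa [div_le_iff₀ (by positivity), mul_comm] at this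
  have hexp : rexp |x| * rexp (-(x ^ 2 / 2)) ≤ rexp (1 / 2) := by
    rw [← exp_add, exp_le_exp]
    nlinarith [sq_abs x, sq_nonneg (|x| - 1)]
  calc |x| ^ j * rexp (-(x ^ 2 / 2)) ≤ j.factorial * rexp |x| * rexp (-(x ^ 2 / 2)) := by gcongr
    _ ≤ j.factorial * rexp (1 / 2) := by rw [mul_assoc]; gcongr

theorem exists_abs_eval_mul_exp_neg_sq_half_le (p : ℝ[X]) :
    ∃ C, ∀ x : ℝ, |p.eval x| * rexp (-(x ^ 2 / 2)) ≤ C := by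
  refine ⟨∑ i ∈ Finset.range (p.natDegree + 1), |p.coeff i| * (i.factorial * rexp (1 / 2)),
    fun x => ?_⟩
  rw [eval_eq_sum_range]
  calc |∑ i ∈ Finset.range (p.natDegree + 1), p.coeff i * x ^ i| * rexp (-(x ^ 2 / 2))
      ≤ (∑ i ∈ Finset.range (p.natDegree + 1), |p.coeff i * x ^ i|) * rexp (-(x ^ 2 / 2)) := by
        gcongr
        exact Finset.abs_sum_le_sum_abs _ _
    _ = ∑ i ∈ Finset.range (p.natDegree + 1), |p.coeff i| * (|x| ^ i * rexp (-(x ^ 2 / 2))) := by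
        simp only [Finset.sum_mul, abs_mul, abs_pow, mul_assoc]
    _ ≤ _ := Finset.sum_le_sum fun i _ =>
        mul_le_mul_of_nonneg_left (abs_pow_mul_exp_neg_sq_half_le i x) (abs_nonneg _)

namespace SchwartzMap

def gaussian : 𝓢(ℝ, ℝ) where
  toFun x := rexp (-(x ^ 2 / 2))
  smooth' := by fun_prop
  decay' k n := by
    obtain ⟨C, hC⟩ :=
      exists_abs_eval_mul_exp_neg_sq_half_le (X ^ k * (hermite n).map (Int.castRingHom ℝ))
    refine ⟨C, fun x => le_of_eq_of_le ?_ (hC x)⟩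
    rw [norm_iteratedFDeriv_eq_norm_iteratedDeriv, iteratedDeriv_eq_iterate,
      deriv_gaussian_eq_hermite_mul_gaussian]
    simp [abs_mul, mul_assoc, aeval_def, eval_map]

@[simp]
theorem gaussian_apply (x : ℝ) : gaussian x = rexp (-(x ^ 2 / 2)) := rfl

/-- Mathlib's `𝓕` uses the kernel `e^{-2πiνs}`; rescaling the frequency by `(2π)⁻¹` gives the
kernel `e^{-iνs}`. -/
def angularFourierCLM : 𝓢(ℝ, ℝ) →L[ℝ] (ℝ →ᵇ ℂ) :=
  toBoundedContinuousFunctionCLM ℝ ℝ ℂ ∘L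
    compCLMOfContinuousLinearEquiv ℝ
      (ContinuousLinearEquiv.unitsEquivAut ℝ (Units.mk0 (2 * π)⁻¹ (by positivity))) ∘L
    fourierTransformCLM ℝ ∘L postcompCLM Complex.ofRealCLM

theorem angularFourierCLM_apply (φ : 𝓢(ℝ, ℝ)) (ν : ℝ) :
    angularFourierCLM φ ν = ∫ s : ℝ, Complex.exp (-(Complex.I * ν * s)) * (φ s : ℂ) := by
  simp only [angularFourierCLM, ContinuousLinearMap.coe_comp, Function.comp_apply,
    toBoundedContinuousFunctionCLM_apply, compCLMOfContinuousLinearEquiv_apply,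
    fourierTransformCLM_apply, ContinuousLinearEquiv.unitsEquivAut_apply, fourier_coe,
    fourier_real_eq_integral_exp_smul, postcompCLM_apply, Complex.ofRealCLM_apply, smul_eq_mul,
    Units.val_mk0]
  congr! 3 with s
  push_cast
  field_simp

theorem angularFourierCLM_gaussian_ne_zero (ν : ℝ) : angularFourierCLM gaussian ν ≠ 0 := by
  have hb : 0 < (1 / 2 : ℂ).re := by norm_num
  have hformula : angularFourierCLM gaussian ν = ∫ x : ℝ,
      Complex.exp (Complex.I * (-ν : ℂ) * x) * Complex.exp (-(1 / 2 : ℂ) * x ^ 2) := by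
    rw [angularFourierCLM_apply]
    congr! 2 with s
    rw [gaussian_apply, Complex.ofReal_exp]
    push_cast
    ring_nf
  rw [hformula, fourierIntegral_gaussian hb]
  refine mul_ne_zero ?_ (Complex.exp_ne_zero _)
  rw [Ne, Complex.cpow_eq_zero_iff]
  norm_num [Real.pi_ne_zero]

end SchwartzMap

/-- If the AC-part of a finite positive measure `μ` is non-trivial, i.e.
`μ(ℝ∖{0}) > 0`, then the set of real Schwartz functions `φ` with
`∫_{ℝ∖{0}} |φ̂(ν)|² dμ(ν) = 0` is meager in the Fréchet space `𝒮(ℝ;ℝ)`. -/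
theorem ac_zero_heat_set_meager (μ : Measure ℝ) [IsFiniteMeasure μ]
    (hμ : 0 < μ ({(0 : ℝ)}ᶜ)) :
    IsMeagre {φ : SchwartzMap ℝ ℝ |
      ∫ ν in ({(0 : ℝ)}ᶜ : Set ℝ),
        ‖∫ s : ℝ, Complex.exp (-(Complex.I * ν * s)) * (φ s : ℂ)‖ ^ 2 ∂μ = 0} := by
  let T := toLp 2 (μ.restrict {0}ᶜ) ℝ ∘L angularFourierCLM
  have hT : T ≠ 0 := by
    intro h
    have hgauss := (toLp_eq_zero_iff ℝ _).1 congr($h gaussian)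
    have hnull : μ.restrict {0}ᶜ Set.univ = 0 := by
      simpa [angularFourierCLM_gaussian_ne_zero] using ae_iff.1 hgauss
    exact hμ.ne' (by rwa [Measure.restrict_apply_univ] at hnull)
  refine (T.isNowhereDense_ker hT).isMeagre.mono fun φ hφ => ?_
  rw [SetLike.mem_coe, LinearMap.mem_ker, ContinuousLinearMap.coe_coe,
    ContinuousLinearMap.comp_apply, toLp_eq_zero_iff]
  exact ae_eq_zero_of_integral_norm_sq_eq_zero _ (by simpa [angularFourierCLM_apply] using hφ)
end
end

section
/- Let (μ_n) be a sequence of finite positive Borel measures on ℝ with sup_n μ_n(ℝ) < ∞, and suppose that for every t ∈ ℝ, ∫_ℝ (1 − cos(tν)) dμ_n(ν) → 0 as n → ∞. Then for every bounded continuous function f : ℝ → ℝ that vanishes on some neighborhood of 0, ∫_ℝ f(ν) dμ_n(ν) → 0 as n → ∞; equivalently, the restrictions μ_n|_{ℝ∖{0}} converge to the trivial measure in the weak*-topology. (Uniform vanishing of the paramagnetic conductivities implies weak*-convergence of the AC-conductivity measures to the trivial measure, as in the limits of perfect conductors and perfect insulators.) -/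
/-!
Averaging `1 - cos (t ν)` over `t ∈ [0, T]` gives `T (1 - sinc (T ν))`, which is at least `T / 2`
as soon as `|T ν| ≥ 2`. With `T = 2 / δ`, a bound `|f| ≤ M` on a function vanishing on `(-δ, δ)`
therefore yields `|∫ f dμ| ≤ M δ ∫₀ᵀ ∫ (1 - cos (t ν)) dμ(ν) dt` by Fubini, and the right-hand
side tends to zero along the sequence by dominated convergence in `t`, the integrands being
bounded by `2 sup_n μ_n(ℝ)`.
-/

open MeasureTheory Filter Real Set

lemma abs_one_sub_cos_le_two (x : ℝ) : |1 - cos x| ≤ 2 :=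
  abs_le.2 ⟨by linarith [cos_le_one x], by linarith [neg_one_le_cos x]⟩

lemma integral_cos_mul_eq_mul_sinc (T ν : ℝ) : ∫ t in 0..T, cos (t * ν) = T * sinc (T * ν) := by
  rcases eq_or_ne ν 0 with rfl | hν
  · simp
  rcases eq_or_ne T 0 with rfl | hT
  · simp
  rw [intervalIntegral.integral_comp_mul_right _ hν, integral_cos,
    sinc_of_ne_zero (mul_ne_zero hT hν)]
  simp only [zero_mul, sin_zero, sub_zero, smul_eq_mul]
  field_simp

lemma integral_one_sub_cos_mul_eq_mul_one_sub_sinc (T ν : ℝ) :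
    ∫ t in 0..T, (1 - cos (t * ν)) = T * (1 - sinc (T * ν)) := by
  rw [intervalIntegral.integral_sub intervalIntegrable_const
    ((by fun_prop : Continuous fun t => cos (t * ν)).intervalIntegrable _ _),
    integral_cos_mul_eq_mul_sinc]
  simp only [intervalIntegral.integral_const, sub_zero, smul_eq_mul, mul_one]
  ring

lemma one_half_le_one_sub_sinc {x : ℝ} (hx : 2 ≤ |x|) : 1 / 2 ≤ 1 - sinc x := by
  have hx0 : x ≠ 0 := by rintro rfl; norm_num at hx
  have hsinc := sinc_le_inv_abs hx0
  have hinv : |x|⁻¹ ≤ 1 / 2 := by rw [inv_eq_one_div]; exact one_div_le_one_div_of_le (by norm_num) hx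
  linarith

section

variable {μ : Measure ℝ} [IsFiniteMeasure μ]

lemma intervalIntegral_integral_one_sub_cos_mul (T : ℝ) :
    ∫ t in 0..T, ∫ ν, (1 - cos (t * ν)) ∂μ = T * ∫ ν, (1 - sinc (T * ν)) ∂μ := by
  have h_int : Integrable (Function.uncurry fun t ν : ℝ => 1 - cos (t * ν))
      ((volume.restrict (uIoc 0 T)).prod μ) :=
    have : IsFiniteMeasure (volume.restrict (uIoc 0 T)) := Real.isFiniteMeasure_restrict_Ioc _ _
    Integrable.of_bound (by fun_prop) 2
      (Eventually.of_forall fun p => abs_one_sub_cos_le_two _)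
  rw [intervalIntegral_integral_swap h_int, ← integral_const_mul]
  simp_rw [integral_one_sub_cos_mul_eq_mul_one_sub_sinc]

lemma abs_integral_le_of_eq_zero_near_zero {f : ℝ → ℝ} (hf : AEStronglyMeasurable f μ)
    {M δ : ℝ} (hM : ∀ x, |f x| ≤ M) (hδ : 0 < δ) (hf0 : ∀ x, |x| < δ → f x = 0) :
    |∫ ν, f ν ∂μ| ≤ M * δ * ∫ t in 0..2 / δ, ∫ ν, (1 - cos (t * ν)) ∂μ := by
  have hM0 : 0 ≤ M := (abs_nonneg _).trans (hM 0)
  have hpt : ∀ ν, |f ν| ≤ 2 * M * (1 - sinc (2 / δ * ν)) := by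
    intro ν
    rcases lt_or_ge |ν| δ with hν | hν
    · rw [hf0 ν hν, abs_zero]
      exact mul_nonneg (by positivity) (sub_nonneg.2 (sinc_le_one _))
    · have : 2 ≤ |2 / δ * ν| := by
        rw [abs_mul, abs_of_pos (by positivity), div_mul_eq_mul_div, le_div_iff₀ hδ]
        linarith
      linarith [hM ν, mul_le_mul_of_nonneg_left (one_half_le_one_sub_sinc this) hM0]
  calc |∫ ν, f ν ∂μ| ≤ ∫ ν, |f ν| ∂μ := abs_integral_le_integral_abs
    _ ≤ ∫ ν, 2 * M * (1 - sinc (2 / δ * ν)) ∂μ :=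
      integral_mono (Integrable.of_bound hf M (Eventually.of_forall hM)).abs
        (((integrable_const 1).sub (Integrable.of_bound (by fun_prop) 1
          (Eventually.of_forall fun ν => abs_sinc_le_one _))).const_mul _) hpt
    _ = M * δ * ∫ t in 0..2 / δ, ∫ ν, (1 - cos (t * ν)) ∂μ := by
      rw [intervalIntegral_integral_one_sub_cos_mul, integral_const_mul]
      field_simp

end

lemma tendsto_intervalIntegral_integral_one_sub_cos_mul {ι : Type*} {l : Filter ι}
    [l.IsCountablyGenerated] {μ : ι → Measure ℝ} [∀ i, IsFiniteMeasure (μ i)] {C : ENNReal}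
    (hC : C ≠ ⊤) (hμC : ∀ i, μ i univ ≤ C)
    (hlim : ∀ t : ℝ, Tendsto (fun i => ∫ ν, (1 - cos (t * ν)) ∂(μ i)) l (nhds 0)) (T : ℝ) :
    Tendsto (fun i => ∫ t in 0..T, ∫ ν, (1 - cos (t * ν)) ∂(μ i)) l (nhds 0) := by
  have hbound : ∀ i t, ‖∫ ν, (1 - cos (t * ν)) ∂(μ i)‖ ≤ 2 * C.toReal := fun i t =>
    (norm_integral_le_of_norm_le_const
      (Eventually.of_forall fun ν => abs_one_sub_cos_le_two _)).trans
      (by gcongr; exact ENNReal.toReal_mono hC (hμC i))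
  simpa using intervalIntegral.tendsto_integral_filter_of_dominated_convergence
    (fun _ => 2 * C.toReal)
    (Eventually.of_forall fun i =>
      ((by fun_prop : Continuous fun p : ℝ × ℝ => 1 - cos (p.1 * p.2)).stronglyMeasurable
        |>.integral_prod_right' (ν := μ i)).aestronglyMeasurable)
    (Eventually.of_forall fun i => Eventually.of_forall fun t _ => hbound i t)
    intervalIntegrable_const (Eventually.of_forall fun t _ => hlim t)

/-- If the paramagnetic conductivities of a uniformly bounded sequence of finite
positive measures vanish pointwise, i.e. `∫ (1 − cos(tν)) dμ_n(ν) → 0` for every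
`t`, then the AC-parts `μ_n|_{ℝ∖{0}}` converge weak* to the trivial measure:
`∫ f dμ_n → 0` for every bounded continuous `f` vanishing near `0`. -/
theorem ac_measures_weak_star_trivial (μ : ℕ → Measure ℝ)
    [∀ n, IsFiniteMeasure (μ n)] (hsup : (⨆ n, μ n Set.univ) < ⊤)
    (hpara : ∀ t : ℝ,
      Tendsto (fun n : ℕ => ∫ ν : ℝ, (1 - Real.cos (t * ν)) ∂(μ n)) atTop (nhds 0))
    (f : ℝ → ℝ) (hf : Continuous f) (hb : ∃ M : ℝ, ∀ x : ℝ, |f x| ≤ M)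
    (h0 : ∀ᶠ x in nhds (0 : ℝ), f x = 0) :
    Tendsto (fun n : ℕ => ∫ ν : ℝ, f ν ∂(μ n)) atTop (nhds 0) := by
  obtain ⟨M, hM⟩ := hb
  obtain ⟨δ, hδ, hf0⟩ := Metric.eventually_nhds_iff.1 h0
  have hkernel := tendsto_intervalIntegral_integral_one_sub_cos_mul hsup.ne
    (le_iSup fun n => μ n univ) hpara (2 / δ)
  refine squeeze_zero_norm (fun n => ?_) (by simpa using hkernel.const_mul (M * δ))
  exact abs_integral_le_of_eq_zero_near_zero hf.aestronglyMeasurable hM hδ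
    fun x hx => hf0 (by rwa [Real.dist_0_eq_abs])
end
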